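/- arXiv:2210.13943 — 6 statements merged into one kernel-verified Lean document; each statement's English description precedes it below -/
import Mathlib

section
/- For every n×k real matrix X all of whose entries lie in the interval [−1,1], there exists an n×k matrix Y all of whose entries lie in {−1,1} such that det(L(Y)ᵀL(Y) + C) ≥ det(L(X)ᵀL(X) + C). (This is Theorem 1 of the paper: for any m-factor interaction model there exists a design maximizing the D-criterion, and the Bayesian D-criterion, all of whose coordinates equal ±1.) -/
/-!
Fix every entry of the design but one, `X i j = t`. Only row `i` of `L(X)` depends on `t`,
and affinely, because each column of the model matrix is a product over distinct factors.
Hence `L(X)ᵀ L(X) + C = M + v vᵀ` with `M` positive semidefinite and `v = a + t • b`, and the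
matrix determinant lemma turns the criterion into a quadratic in `t` with leading coefficient
`det M · bᵀ M⁻¹ b ≥ 0` (for positive definite `M`; the semidefinite case follows by
continuity). A convex function on `[-1, 1]` is maximal at an endpoint, so the entries can be
rounded to `±1` one at a time without decreasing the criterion.
-/

open Matrix

/-- The model matrix of an `m`-factor interaction model given by the family `𝒮` of
subsets of factor indices: entry `(i, S)` is `∏_{j ∈ S} X i j`. -/
noncomputable def modelMatrix {n k : ℕ} (𝒮 : Finset (Finset (Fin k)))
    (X : Matrix (Fin n) (Fin k) ℝ) : Matrix (Fin n) {S // S ∈ 𝒮} ℝ :=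
  Matrix.of fun i S => ∏ j ∈ S.1, X i j

/-- The full matrix `L(X) = [F(X) | Z]`. -/
noncomputable def fullMatrix {n k b : ℕ} (𝒮 : Finset (Finset (Fin k)))
    (Z : Matrix (Fin n) (Fin b) ℝ) (X : Matrix (Fin n) (Fin k) ℝ) :
    Matrix (Fin n) ({S // S ∈ 𝒮} ⊕ Fin b) ℝ :=
  Matrix.fromCols (modelMatrix 𝒮 X) Z

theorem quadratic_le_max_neg_one_one {c₀ c₁ c₂ t : ℝ} (hc₂ : 0 ≤ c₂)
    (ht : t ∈ Set.Icc (-1 : ℝ) 1) :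
    c₀ + c₁ * t + c₂ * t ^ 2 ≤
      max (c₀ + c₁ * (-1) + c₂ * (-1) ^ 2) (c₀ + c₁ * 1 + c₂ * 1 ^ 2) := by
  obtain ⟨h₁, h₂⟩ := ht
  have ht2 : t ^ 2 ≤ 1 := by nlinarith
  rcases le_total 0 c₁ with h | h
  · exact le_max_of_le_right (by nlinarith [mul_nonneg hc₂ (sub_nonneg.mpr ht2)])
  · exact le_max_of_le_left (by nlinarith [mul_nonneg hc₂ (sub_nonneg.mpr ht2)])

namespace Matrix

section Determinant

variable {ι R : Type*} [Fintype ι] [DecidableEq ι]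

theorem det_add_vecMulVec_self [CommRing R] {M : Matrix ι ι R} (hM : IsUnit M.det)
    (v : ι → R) :
    (M + vecMulVec v v).det = M.det * (1 + v ⬝ᵥ M⁻¹ *ᵥ v) := by
  rw [vecMulVec_eq Unit, det_add_replicateCol_mul_replicateRow hM, ← replicateRow_vecMul,
    det_unique (1 + _), add_apply, one_apply_eq, replicateRow_mul_replicateCol_apply,
    dotProduct_mulVec]

theorem PosDef.det_add_vecMulVec_affine_le_max {M : Matrix ι ι ℝ} (hM : M.PosDef)
    (a b : ι → ℝ) {t : ℝ} (ht : t ∈ Set.Icc (-1 : ℝ) 1) :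
    (M + vecMulVec (a + t • b) (a + t • b)).det ≤
      max (M + vecMulVec (a + (-1 : ℝ) • b) (a + (-1 : ℝ) • b)).det
        (M + vecMulVec (a + (1 : ℝ) • b) (a + (1 : ℝ) • b)).det := by
  have hquad : ∀ s : ℝ, (M + vecMulVec (a + s • b) (a + s • b)).det =
      M.det * (1 + a ⬝ᵥ M⁻¹ *ᵥ a) + M.det * (a ⬝ᵥ M⁻¹ *ᵥ b + b ⬝ᵥ M⁻¹ *ᵥ a) * s +
        M.det * (b ⬝ᵥ M⁻¹ *ᵥ b) * s ^ 2 := by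
    intro s
    rw [det_add_vecMulVec_self hM.det_pos.ne'.isUnit (a + s • b)]
    simp only [mulVec_add, mulVec_smul, dotProduct_add, add_dotProduct, smul_dotProduct,
      dotProduct_smul, smul_eq_mul]
    ring
  have hb : 0 ≤ b ⬝ᵥ M⁻¹ *ᵥ b := by
    simpa using hM.inv.posSemidef.dotProduct_mulVec_nonneg b
  simp only [hquad]
  exact quadratic_le_max_neg_one_one (mul_nonneg hM.det_pos.le hb) ht

theorem PosSemidef.det_add_vecMulVec_affine_le_max {M : Matrix ι ι ℝ} (hM : M.PosSemidef)
    (a b : ι → ℝ) {t : ℝ} (ht : t ∈ Set.Icc (-1 : ℝ) 1) :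
    (M + vecMulVec (a + t • b) (a + t • b)).det ≤
      max (M + vecMulVec (a + (-1 : ℝ) • b) (a + (-1 : ℝ) • b)).det
        (M + vecMulVec (a + (1 : ℝ) • b) (a + (1 : ℝ) • b)).det := by
  let f : ℝ → ℝ → ℝ := fun s ε => (M + ε • 1 + vecMulVec (a + s • b) (a + s • b)).det
  have hf : ∀ s, Continuous (f s) := fun s => by fun_prop
  have hpos : ∀ ε ∈ Set.Ioi (0 : ℝ), f t ε ≤ max (f (-1) ε) (f 1 ε) := fun ε hε =>
    (PosDef.posSemidef_add hM (PosDef.one.smul hε)).det_add_vecMulVec_affine_le_max a b ht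
  have h0 := le_on_closure hpos (hf t).continuousOn ((hf (-1)).max (hf 1)).continuousOn
    (by rw [closure_Ioi]; exact Set.self_mem_Ici)
  simpa [f] using h0

end Determinant

section Rows

variable {m n ι α R : Type*} [DecidableEq m]

theorem transpose_mul_self_updateRow [Fintype m] [CommSemiring R] (L : Matrix m ι R) (i : m)
    (v : ι → R) :
    (updateRow L i v)ᵀ * updateRow L i v =
      (updateRow L i 0)ᵀ * updateRow L i 0 + vecMulVec v v := by
  ext c d
  simp only [add_apply, mul_apply, transpose_apply, vecMulVec_apply, updateRow_apply]
  rw [← Finset.add_sum_erase _ _ (Finset.mem_univ i),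
    ← Finset.add_sum_erase _ _ (Finset.mem_univ i)]
  simp only [↓reduceIte, Pi.zero_apply, zero_mul, zero_add]
  rw [add_comm]
  congr 1
  refine Finset.sum_congr rfl fun x hx => ?_
  simp only [Finset.ne_of_mem_erase hx, ↓reduceIte]

variable [DecidableEq n]

def updateEntry (M : Matrix m n α) (i : m) (j : n) (x : α) : Matrix m n α :=
  updateRow M i (Function.update (M i) j x)

theorem updateEntry_apply (M : Matrix m n α) (i : m) (j : n) (x : α) (i' : m) (j' : n) :
    updateEntry M i j x i' j' = if i' = i ∧ j' = j then x else M i' j' := by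
  by_cases hi : i' = i
  · subst hi
    by_cases hj : j' = j <;> simp [updateEntry, hj]
  · simp [updateEntry, hi]

@[simp]
theorem updateEntry_self (M : Matrix m n α) (i : m) (j : n) :
    updateEntry M i j (M i j) = M := by
  simp [updateEntry]

end Rows

end Matrix

theorem Finset.prod_update_eq_affine {ι R : Type*} [DecidableEq ι] [CommRing R] (s : Finset ι)
    (x : ι → R) (j : ι) (t : R) :
    ∏ l ∈ s, Function.update x j t l =
      ∏ l ∈ s, Function.update x j 0 l +
        t * (∏ l ∈ s, Function.update x j 1 l - ∏ l ∈ s, Function.update x j 0 l) := by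
  by_cases hj : j ∈ s
  · simp only [Finset.prod_update_of_mem hj]
    ring
  · simp only [Finset.prod_update_of_notMem hj]
    ring

noncomputable def dCriterion {m ι : Type*} [Fintype m] [Fintype ι] [DecidableEq ι]
    (C : Matrix ι ι ℝ) (L : Matrix m ι ℝ) : ℝ :=
  (Lᵀ * L + C).det

theorem Matrix.PosSemidef.dCriterion_updateRow_affine_le_max {m ι : Type*} [Fintype m]
    [DecidableEq m] [Fintype ι] [DecidableEq ι] {C : Matrix ι ι ℝ} (hC : C.PosSemidef)
    (L : Matrix m ι ℝ) (i : m) (a b : ι → ℝ) {t : ℝ} (ht : t ∈ Set.Icc (-1 : ℝ) 1) :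
    dCriterion C (updateRow L i (a + t • b)) ≤
      max (dCriterion C (updateRow L i (a + (-1 : ℝ) • b)))
        (dCriterion C (updateRow L i (a + (1 : ℝ) • b))) := by
  have hM : ((updateRow L i 0)ᵀ * updateRow L i 0 + C).PosSemidef := by
    simpa using (posSemidef_conjTranspose_mul_self (updateRow L i 0)).add hC
  have hsplit : ∀ s : ℝ, dCriterion C (updateRow L i (a + s • b)) =
      ((updateRow L i 0)ᵀ * updateRow L i 0 + C + vecMulVec (a + s • b) (a + s • b)).det :=
    fun s => by rw [dCriterion, transpose_mul_self_updateRow, add_right_comm]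
  simp only [hsplit]
  exact hM.det_add_vecMulVec_affine_le_max a b ht

section Design

variable {n k b : ℕ} (𝒮 : Finset (Finset (Fin k))) (Z : Matrix (Fin n) (Fin b) ℝ)
  {C : Matrix ({S // S ∈ 𝒮} ⊕ Fin b) ({S // S ∈ 𝒮} ⊕ Fin b) ℝ}

theorem fullMatrix_updateEntry (X : Matrix (Fin n) (Fin k) ℝ) (i : Fin n) (j : Fin k)
    (t : ℝ) :
    fullMatrix 𝒮 Z (updateEntry X i j t) = updateRow (fullMatrix 𝒮 Z X) i
      (Sum.elim (fun S => ∏ l ∈ S.1, Function.update (X i) j t l) (Z i)) := by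
  ext i' (S | c)
  · by_cases hi : i' = i
    · subst hi
      simp [fullMatrix, modelMatrix, updateEntry]
    · simp [fullMatrix, modelMatrix, updateEntry, hi]
  · by_cases hi : i' = i
    · subst hi
      simp [fullMatrix, updateEntry]
    · simp [fullMatrix, updateEntry, hi]

theorem exists_sign_dCriterion_le_updateEntry (hC : C.PosSemidef)
    (X : Matrix (Fin n) (Fin k) ℝ) (i : Fin n) (j : Fin k) (hX : X i j ∈ Set.Icc (-1 : ℝ) 1) :
    ∃ s : ℝ, (s = -1 ∨ s = 1) ∧
      dCriterion C (fullMatrix 𝒮 Z X) ≤ dCriterion C (fullMatrix 𝒮 Z (updateEntry X i j s)) := by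
  set row : ℝ → {S // S ∈ 𝒮} ⊕ Fin b → ℝ :=
    fun t => Sum.elim (fun S => ∏ l ∈ S.1, Function.update (X i) j t l) (Z i)
  have haffine : ∀ t, row t = row 0 + t • (row 1 - row 0) := by
    intro t
    ext (S | c)
    · exact Finset.prod_update_eq_affine _ _ _ _
    · simp [row]
  have hfull : ∀ t, fullMatrix 𝒮 Z (updateEntry X i j t) =
      updateRow (fullMatrix 𝒮 Z X) i (row 0 + t • (row 1 - row 0)) := fun t => by
    rw [fullMatrix_updateEntry, ← haffine]
  have key := hC.dCriterion_updateRow_affine_le_max (fullMatrix 𝒮 Z X) i (row 0)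
    (row 1 - row 0) hX
  rw [← hfull, ← hfull, ← hfull, updateEntry_self] at key
  rcases le_max_iff.mp key with h | h
  · exact ⟨-1, Or.inl rfl, h⟩
  · exact ⟨1, Or.inr rfl, h⟩

theorem exists_signs_on_dCriterion_le (hC : C.PosSemidef) (X : Matrix (Fin n) (Fin k) ℝ)
    (hX : ∀ i j, X i j ∈ Set.Icc (-1 : ℝ) 1) (P : Finset (Fin n × Fin k)) :
    ∃ Y : Matrix (Fin n) (Fin k) ℝ, (∀ i j, Y i j ∈ Set.Icc (-1 : ℝ) 1) ∧
      (∀ p ∈ P, Y p.1 p.2 = -1 ∨ Y p.1 p.2 = 1) ∧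
      dCriterion C (fullMatrix 𝒮 Z X) ≤ dCriterion C (fullMatrix 𝒮 Z Y) := by
  induction P using Finset.induction_on with
  | empty => exact ⟨X, hX, by simp, le_rfl⟩
  | @insert p P _ ih =>
    obtain ⟨Y, hYbox, hYsign, hXY⟩ := ih
    obtain ⟨s, hs, hYY'⟩ :=
      exists_sign_dCriterion_le_updateEntry 𝒮 Z hC Y p.1 p.2 (hYbox _ _)
    have hsbox : s ∈ Set.Icc (-1 : ℝ) 1 := by rcases hs with rfl | rfl <;> norm_num
    refine ⟨updateEntry Y p.1 p.2 s, fun i j => ?_, fun q hq => ?_, hXY.trans hYY'⟩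
    · rw [updateEntry_apply]; split_ifs
      exacts [hsbox, hYbox i j]
    · rw [updateEntry_apply]; split_ifs with hqp
      · exact hs
      · exact hYsign q ((Finset.mem_insert.mp hq).resolve_left fun h => hqp (by simp [h]))

end Design

theorem stmt0_general (n k b : ℕ)
    (𝒮 : Finset (Finset (Fin k)))
    (Z : Matrix (Fin n) (Fin b) ℝ)
    (C : Matrix ({S // S ∈ 𝒮} ⊕ Fin b) ({S // S ∈ 𝒮} ⊕ Fin b) ℝ)
    (hC : C.PosSemidef)
    (X : Matrix (Fin n) (Fin k) ℝ)
    (hX : ∀ i j, X i j ∈ Set.Icc (-1 : ℝ) 1) :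
    ∃ Y : Matrix (Fin n) (Fin k) ℝ,
      (∀ i j, Y i j = -1 ∨ Y i j = 1) ∧
      ((fullMatrix 𝒮 Z X)ᵀ * fullMatrix 𝒮 Z X + C).det ≤
        ((fullMatrix 𝒮 Z Y)ᵀ * fullMatrix 𝒮 Z Y + C).det := by
  obtain ⟨Y, -, hY, hXY⟩ := exists_signs_on_dCriterion_le 𝒮 Z hC X hX Finset.univ
  exact ⟨Y, fun i j => hY (i, j) (Finset.mem_univ _), hXY⟩

/-- Theorem 1 of the paper: for any `m`-factor interaction model there exists a
design all of whose coordinates equal `±1` maximizing the (Bayesian) `D`-criterion. -/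
theorem stmt0 (n k m b : ℕ) (hn : 0 < n) (hk : 0 < k) (hm : 0 < m) (hmk : m ≤ k)
    (hb : 0 < b)
    (𝒮 : Finset (Finset (Fin k)))
    (hsingle : ∀ j : Fin k, {j} ∈ 𝒮)
    (hS : ∀ S ∈ 𝒮, S.Nonempty ∧ S.card ≤ m)
    (hmax : ∃ S ∈ 𝒮, S.card = m)
    (Z : Matrix (Fin n) (Fin b) ℝ)
    (C : Matrix ({S // S ∈ 𝒮} ⊕ Fin b) ({S // S ∈ 𝒮} ⊕ Fin b) ℝ)
    (hC : C.PosSemidef)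
    (X : Matrix (Fin n) (Fin k) ℝ)
    (hX : ∀ i j, X i j ∈ Set.Icc (-1 : ℝ) 1) :
    ∃ Y : Matrix (Fin n) (Fin k) ℝ,
      (∀ i j, Y i j = -1 ∨ Y i j = 1) ∧
      ((fullMatrix 𝒮 Z X)ᵀ * fullMatrix 𝒮 Z X + C).det ≤
        ((fullMatrix 𝒮 Z Y)ᵀ * fullMatrix 𝒮 Z Y + C).det :=
  stmt0_general n k b 𝒮 Z C hC X hX
end

section
/- Assume ZᵀZ is invertible and let P_Z = Z(ZᵀZ)⁻¹Zᵀ. For every n×k real matrix X all of whose entries lie in [−1,1], there exists an n×k matrix Y all of whose entries lie in {−1,1} such that det(F(Y)ᵀ(I−P_Z)F(Y) + C_F) ≥ det(F(X)ᵀ(I−P_Z)F(X) + C_F). (This is Theorem 1 of the paper for the D_s- and Bayesian D_s-criteria: there exists an optimal design all of whose coordinates equal ±1.) -/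
/-!
Fix every entry of the design except `X i j = t`. Each column of the model matrix is a product
in which `t` occurs at most once, so the model matrix is `A + t • u rᵀ`, and the information
matrix `Fᵀ M F + C` equals `H + t (r aᵀ + b rᵀ) + c t² r rᵀ`. For invertible `H` the matrix
determinant lemma reduces its determinant to a `2 × 2` determinant, which is quadratic in `t`:
the cubic term cancels because both rank-one directions carrying `t²` are along `r`. A quadratic
polynomial that is nonnegative on all of `ℝ` has nonnegative leading coefficient, so its maximum
on `[-1, 1]` is attained at `t = ±1`. Invertibility is arranged by replacing `C` by `C + ε • 1`
and letting `ε → 0⁺`. Moving the entries to `±1` one at a time never decreases the criterion;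
here `M = 1 - Z (ZᵀZ)⁻¹ Zᵀ` is positive semidefinite, being a symmetric idempotent.
-/

open Matrix

open Filter Topology Set

def infoDet {R ι κ : Type*} [CommRing R] [Fintype ι] [DecidableEq ι] [Fintype κ]
    (M : Matrix κ κ R) (C : Matrix ι ι R) (F : Matrix κ ι R) : R :=
  (Fᵀ * M * F + C).det

lemma transpose_add_smul_vecMulVec_mul_mul {R ι κ : Type*} [CommRing R] [Fintype κ]
    (M : Matrix κ κ R) (A : Matrix κ ι R) (u : κ → R) (r : ι → R) (t : R) :
    (A + t • vecMulVec u r)ᵀ * M * (A + t • vecMulVec u r) =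
      Aᵀ * M * A + t • vecMulVec r (u ᵥ* M ᵥ* A) + t • vecMulVec ((Aᵀ * M) *ᵥ u) r
        + (t ^ 2 * (u ᵥ* M ⬝ᵥ u)) • vecMulVec r r := by
  rw [transpose_add, transpose_smul, transpose_vecMulVec, Matrix.add_mul, Matrix.add_mul,
    Matrix.mul_add, Matrix.mul_add]
  simp only [Matrix.smul_mul, Matrix.mul_smul, smul_smul, vecMulVec_mul]
  simp only [vecMul_vecMulVec, vecMulVec_smul, smul_smul, mul_vecMulVec, ← sq]
  abel

lemma exists_quadratic_det_add_smul_vecMulVec {R ι : Type*} [CommRing R] [Fintype ι]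
    [DecidableEq ι] {H : Matrix ι ι R} (hH : IsUnit H.det) (r a b : ι → R) (c : R) :
    ∃ α β γ : R, ∀ t : R,
      (H + t • vecMulVec r a + t • vecMulVec b r + (t ^ 2 * c) • vecMulVec r r).det =
        α + β * t + γ * t ^ 2 := by
  set U : Matrix ι (Fin 2) R := Matrix.of fun s p => ![r s, b s] p
  set x := a ᵥ* (H⁻¹ * U)
  set y := r ᵥ* (H⁻¹ * U)
  refine ⟨H.det, H.det * (x 0 + y 1), H.det * (x 0 * y 1 - x 1 * y 0 + c * y 0), fun t => ?_⟩
  have hUV : t • vecMulVec r a + t • vecMulVec b r + (t ^ 2 * c) • vecMulVec r r =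
      U * Matrix.of ![t • a + (t ^ 2 * c) • r, t • r] := by
    ext s s'
    simp only [U, Matrix.add_apply, Matrix.smul_apply, vecMulVec_apply, smul_eq_mul,
      Matrix.mul_apply, of_apply, cons_val', Pi.add_apply, Pi.smul_apply, cons_val_fin_one,
      Fin.sum_univ_two, cons_val_zero, cons_val_one]
    ring
  have hVG : Matrix.of ![t • a + (t ^ 2 * c) • r, t • r] * (H⁻¹ * U) =
      Matrix.of ![t • x + (t ^ 2 * c) • y, t • y] := by
    ext p q
    fin_cases p <;> simp [Matrix.mul_apply, x, y, vecMul, dotProduct, Finset.sum_add_distrib,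
      Finset.mul_sum, add_mul, mul_assoc]
  rw [add_assoc, add_assoc, ← add_assoc (t • _), hUV, det_add_mul _ _ hH, Matrix.mul_assoc,
    hVG, det_fin_two]
  simp only [Matrix.add_apply, one_apply_eq, one_apply_ne zero_ne_one, one_apply_ne one_ne_zero,
    of_apply, cons_val', Pi.add_apply, Pi.smul_apply, smul_eq_mul, cons_val_fin_one,
    cons_val_zero, cons_val_one, zero_add]
  ring

lemma exists_quadratic_infoDet_add_smul_vecMulVec {R ι κ : Type*} [CommRing R] [Fintype ι]
    [DecidableEq ι] [Fintype κ] (M : Matrix κ κ R) {C : Matrix ι ι R} (A : Matrix κ ι R)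
    (hA : IsUnit (infoDet M C A)) (u : κ → R) (r : ι → R) :
    ∃ α β γ : R, ∀ t : R, infoDet M C (A + t • vecMulVec u r) = α + β * t + γ * t ^ 2 := by
  obtain ⟨α, β, γ, h⟩ := exists_quadratic_det_add_smul_vecMulVec hA r (u ᵥ* M ᵥ* A)
    ((Aᵀ * M) *ᵥ u) (u ᵥ* M ⬝ᵥ u)
  refine ⟨α, β, γ, fun t => ?_⟩
  rw [← h t, infoDet, transpose_add_smul_vecMulVec_mul_mul]
  congr 1
  abel

lemma nonneg_of_forall_nonneg_quadratic {α β γ : ℝ} (h : ∀ t, 0 ≤ α + β * t + γ * t ^ 2) :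
    0 ≤ γ := by
  by_contra! hγ
  -- at this `t` the value is at most `γ * t < 0`
  set t := 1 + (|α| + |β|) / -γ
  have ht : 1 ≤ t := le_add_of_nonneg_right (div_nonneg (by positivity) (by linarith))
  have hγt : γ * t = γ - (|α| + |β|) := by
    simp only [t]
    field_simp [hγ.ne]
    ring
  nlinarith [h t, le_abs_self α, le_abs_self β, neg_abs_le β, abs_nonneg α]

lemma quadratic_le_max_of_mem_Icc {α β γ t : ℝ} (hγ : 0 ≤ γ) (ht : t ∈ Icc (-1 : ℝ) 1) :
    α + β * t + γ * t ^ 2 ≤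
      max (α + β * (-1) + γ * (-1) ^ 2) (α + β * 1 + γ * 1 ^ 2) := by
  have ht2 : γ * t ^ 2 ≤ γ := mul_le_of_le_one_right hγ (by nlinarith [ht.1, ht.2])
  rcases le_total 0 β with hβ | hβ
  · exact le_max_of_le_right (by nlinarith [ht.2])
  · exact le_max_of_le_left (by nlinarith [ht.1])

lemma posSemidef_one_sub_mul_inv_mul_transpose {m b : Type*} [Fintype m] [DecidableEq m]
    [Fintype b] [DecidableEq b] {Z : Matrix m b ℝ} (hZ : IsUnit (Zᵀ * Z)) :
    (1 - Z * (Zᵀ * Z)⁻¹ * Zᵀ).PosSemidef := by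
  set P := Z * (Zᵀ * Z)⁻¹ * Zᵀ
  have hPt : Pᵀ = P := by
    simp only [P, transpose_mul, transpose_transpose, transpose_nonsing_inv, Matrix.mul_assoc]
  have hPP : P * P = P := by
    calc P * P = Z * ((Zᵀ * Z)⁻¹ * (Zᵀ * Z)) * (Zᵀ * Z)⁻¹ * Zᵀ := by
          simp only [P, Matrix.mul_assoc]
      _ = P := by rw [nonsing_inv_mul _ ((isUnit_iff_isUnit_det _).mp hZ), Matrix.mul_one]
  have h : 1 - P = (1 - P)ᴴ * (1 - P) := by
    rw [conjTranspose_eq_transpose_of_trivial, transpose_sub, transpose_one, hPt,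
      Matrix.sub_mul, Matrix.mul_sub, Matrix.mul_sub, hPP]
    simp
  rw [h]
  exact posSemidef_conjTranspose_mul_self _

section InfoDet

variable {ι κ : Type*} [Fintype ι] [DecidableEq ι] [Fintype κ]

lemma infoDet_pos {M : Matrix κ κ ℝ} (hM : M.PosSemidef) {H : Matrix ι ι ℝ} (hH : H.PosDef)
    (F : Matrix κ ι ℝ) : 0 < infoDet M H F := by
  have hF : (Fᵀ * M * F).PosSemidef := by
    simpa [conjTranspose_eq_transpose_of_trivial] using hM.conjTranspose_mul_mul_same F
  exact (PosDef.posSemidef_add hF hH).det_pos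

lemma infoDet_le_max_of_posDef {M : Matrix κ κ ℝ} (hM : M.PosSemidef) {H : Matrix ι ι ℝ}
    (hH : H.PosDef) (A : Matrix κ ι ℝ) (u : κ → ℝ) (r : ι → ℝ) {t : ℝ}
    (ht : t ∈ Icc (-1 : ℝ) 1) :
    infoDet M H (A + t • vecMulVec u r) ≤
      max (infoDet M H (A + (-1 : ℝ) • vecMulVec u r))
        (infoDet M H (A + (1 : ℝ) • vecMulVec u r)) := by
  obtain ⟨α, β, γ, hq⟩ := exists_quadratic_infoDet_add_smul_vecMulVec M A
    (infoDet_pos hM hH A).ne'.isUnit u r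
  have hγ : 0 ≤ γ :=
    nonneg_of_forall_nonneg_quadratic fun s => hq s ▸ (infoDet_pos hM hH _).le
  simpa only [hq] using quadratic_le_max_of_mem_Icc hγ ht

lemma tendsto_infoDet_add_smul_one (M : Matrix κ κ ℝ) (C : Matrix ι ι ℝ) (F : Matrix κ ι ℝ) :
    Tendsto (fun ε : ℝ => infoDet M (C + ε • 1) F) (𝓝[>] 0) (𝓝 (infoDet M C F)) := by
  have hcont : Continuous fun ε : ℝ => infoDet M (C + ε • 1) F := by
    unfold infoDet
    fun_prop
  simpa using (hcont.tendsto 0).mono_left nhdsWithin_le_nhds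

lemma infoDet_le_max {M : Matrix κ κ ℝ} (hM : M.PosSemidef) {C : Matrix ι ι ℝ}
    (hC : C.PosSemidef) (A : Matrix κ ι ℝ) (u : κ → ℝ) (r : ι → ℝ) {t : ℝ}
    (ht : t ∈ Icc (-1 : ℝ) 1) :
    infoDet M C (A + t • vecMulVec u r) ≤
      max (infoDet M C (A + (-1 : ℝ) • vecMulVec u r))
        (infoDet M C (A + (1 : ℝ) • vecMulVec u r)) := by
  refine le_of_tendsto_of_tendsto (tendsto_infoDet_add_smul_one M C _)
    ((tendsto_infoDet_add_smul_one M C _).max (tendsto_infoDet_add_smul_one M C _)) ?_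
  filter_upwards [self_mem_nhdsWithin] with ε hε
  exact infoDet_le_max_of_posDef hM (PosDef.posSemidef_add hC (PosDef.one.smul hε)) A u r ht

end InfoDet

lemma updateRow_update_apply {m n α : Type*} [DecidableEq m] [DecidableEq n]
    (X : Matrix m n α) (i : m) (j : n) (c : α) (i' : m) (j' : n) :
    X.updateRow i (Function.update (X i) j c) i' j' =
      if i' = i ∧ j' = j then c else X i' j' := by
  rw [updateRow_apply, Function.update_apply]
  split_ifs <;> simp_all

lemma exists_sign_matrix_le_of_exists_update_le {m n : Type*} [Fintype m] [Fintype n]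
    [DecidableEq m] [DecidableEq n] (f : Matrix m n ℝ → ℝ)
    (hf : ∀ X : Matrix m n ℝ, (∀ i j, X i j ∈ Icc (-1 : ℝ) 1) → ∀ i j,
      ∃ s : ℝ, (s = -1 ∨ s = 1) ∧ f X ≤ f (X.updateRow i (Function.update (X i) j s)))
    (X : Matrix m n ℝ) (hX : ∀ i j, X i j ∈ Icc (-1 : ℝ) 1) :
    ∃ Y : Matrix m n ℝ, (∀ i j, Y i j = -1 ∨ Y i j = 1) ∧ f X ≤ f Y := by
  suffices h : ∀ s : Finset (m × n), ∀ X : Matrix m n ℝ, (∀ i j, X i j ∈ Icc (-1 : ℝ) 1) →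
      (∀ p ∉ s, X p.1 p.2 = -1 ∨ X p.1 p.2 = 1) →
      ∃ Y : Matrix m n ℝ, (∀ i j, Y i j = -1 ∨ Y i j = 1) ∧ f X ≤ f Y from
    h Finset.univ X hX fun p hp => absurd (Finset.mem_univ p) hp
  intro s
  induction s using Finset.induction_on with
  | empty => exact fun X _ hX => ⟨X, fun i j => hX (i, j) (Finset.notMem_empty _), le_rfl⟩
  | insert p s _ ih =>
    intro X hX hXs
    obtain ⟨c, hc, hle⟩ := hf X hX p.1 p.2
    have hc' : c ∈ Icc (-1 : ℝ) 1 := by rcases hc with rfl | rfl <;> norm_num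
    obtain ⟨Y, hY, hXY⟩ := ih (X.updateRow p.1 (Function.update (X p.1) p.2 c))
      (fun i j => by
        rw [updateRow_update_apply]
        split_ifs
        exacts [hc', hX i j])
      (fun q hq => by
        rw [updateRow_update_apply]
        split_ifs with hqp
        exacts [hc, hXs q fun hmem =>
          (Finset.mem_insert.mp hmem).elim (fun e => hqp (Prod.ext_iff.mp e)) hq])
    exact ⟨Y, hY, hle.trans hXY⟩

lemma exists_modelMatrix_updateRow_update_eq {n k : ℕ} (𝒮 : Finset (Finset (Fin k)))
    (X : Matrix (Fin n) (Fin k) ℝ) (i : Fin n) (j : Fin k) :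
    ∃ (A : Matrix (Fin n) 𝒮 ℝ) (u : Fin n → ℝ) (r : 𝒮 → ℝ), ∀ t : ℝ,
      modelMatrix 𝒮 (X.updateRow i (Function.update (X i) j t)) = A + t • vecMulVec u r := by
  refine ⟨modelMatrix 𝒮 (X.updateRow i (Function.update (X i) j 0)), Pi.single i 1,
    fun S => if j ∈ S.1 then ∏ x ∈ S.1 \ {j}, X i x else 0, fun t => ?_⟩
  ext i' S
  by_cases hi : i' = i
  · subst hi
    by_cases hj : j ∈ S.1 <;>
      simp [modelMatrix, vecMulVec_apply, hj, Finset.prod_update_of_mem,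
        Finset.prod_update_of_notMem]
  · simp [modelMatrix, vecMulVec_apply, hi]

lemma exists_sign_infoDet_modelMatrix_le {n k : ℕ} (𝒮 : Finset (Finset (Fin k)))
    {M : Matrix (Fin n) (Fin n) ℝ} (hM : M.PosSemidef) {C : Matrix 𝒮 𝒮 ℝ}
    (hC : C.PosSemidef) (X : Matrix (Fin n) (Fin k) ℝ) (i : Fin n) (j : Fin k)
    (hX : X i j ∈ Icc (-1 : ℝ) 1) :
    ∃ s : ℝ, (s = -1 ∨ s = 1) ∧
      infoDet M C (modelMatrix 𝒮 X) ≤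
        infoDet M C (modelMatrix 𝒮 (X.updateRow i (Function.update (X i) j s))) := by
  obtain ⟨A, u, r, hF⟩ := exists_modelMatrix_updateRow_update_eq 𝒮 X i j
  have h := infoDet_le_max hM hC A u r hX
  rw [← hF, ← hF, ← hF, Function.update_eq_self, updateRow_eq_self] at h
  rcases le_max_iff.mp h with h | h
  · exact ⟨-1, Or.inl rfl, h⟩
  · exact ⟨1, Or.inr rfl, h⟩

theorem stmt1_general (n k b : ℕ)
    (𝒮 : Finset (Finset (Fin k)))
    (Z : Matrix (Fin n) (Fin b) ℝ)
    (hZ : IsUnit (Zᵀ * Z))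
    (CF : Matrix {S // S ∈ 𝒮} {S // S ∈ 𝒮} ℝ)
    (hCF : CF.PosSemidef)
    (X : Matrix (Fin n) (Fin k) ℝ)
    (hX : ∀ i j, X i j ∈ Set.Icc (-1 : ℝ) 1) :
    ∃ Y : Matrix (Fin n) (Fin k) ℝ,
      (∀ i j, Y i j = -1 ∨ Y i j = 1) ∧
      ((modelMatrix 𝒮 X)ᵀ * (1 - Z * (Zᵀ * Z)⁻¹ * Zᵀ) * modelMatrix 𝒮 X + CF).det ≤
        ((modelMatrix 𝒮 Y)ᵀ * (1 - Z * (Zᵀ * Z)⁻¹ * Zᵀ) * modelMatrix 𝒮 Y + CF).det :=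
  exists_sign_matrix_le_of_exists_update_le
    (fun Y => infoDet (1 - Z * (Zᵀ * Z)⁻¹ * Zᵀ) CF (modelMatrix 𝒮 Y))
    (fun Y hY i j => exists_sign_infoDet_modelMatrix_le 𝒮
      (posSemidef_one_sub_mul_inv_mul_transpose hZ) hCF Y i j (hY i j))
    X hX

/-- Theorem 1 of the paper for the `D_s`- and Bayesian `D_s`-criteria: there exists an
optimal design all of whose coordinates equal `±1`. -/
theorem stmt1 (n k m b : ℕ) (hn : 0 < n) (hk : 0 < k) (hm : 0 < m) (hmk : m ≤ k)
    (hb : 0 < b)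
    (𝒮 : Finset (Finset (Fin k)))
    (hsingle : ∀ j : Fin k, {j} ∈ 𝒮)
    (hS : ∀ S ∈ 𝒮, S.Nonempty ∧ S.card ≤ m)
    (hmax : ∃ S ∈ 𝒮, S.card = m)
    (Z : Matrix (Fin n) (Fin b) ℝ)
    (hZ : IsUnit (Zᵀ * Z))
    (CF : Matrix {S // S ∈ 𝒮} {S // S ∈ 𝒮} ℝ)
    (hCF : CF.PosSemidef)
    (X : Matrix (Fin n) (Fin k) ℝ)
    (hX : ∀ i j, X i j ∈ Set.Icc (-1 : ℝ) 1) :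
    ∃ Y : Matrix (Fin n) (Fin k) ℝ,
      (∀ i j, Y i j = -1 ∨ Y i j = 1) ∧
      ((modelMatrix 𝒮 X)ᵀ * (1 - Z * (Zᵀ * Z)⁻¹ * Zᵀ) * modelMatrix 𝒮 X + CF).det ≤
        ((modelMatrix 𝒮 Y)ᵀ * (1 - Z * (Zᵀ * Z)⁻¹ * Zᵀ) * modelMatrix 𝒮 Y + CF).det :=
  stmt1_general n k b 𝒮 Z hZ CF hCF X hX
end

section
/- Let B be an n×p real matrix, u ∈ ℝⁿ, g ∈ ℝᵖ, and let C be a p×p real symmetric positive semidefinite matrix. Then there exist real numbers α, β, γ with α ≥ 0 such that for every t ∈ ℝ, det((B + t·u gᵀ)ᵀ(B + t·u gᵀ) + C) = α t² + β t + γ. In particular, this determinant is a convex quadratic polynomial in t, and its maximum over t ∈ [−1,1] is attained at t = −1 or t = 1. -/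
/-!
Expanding the determinant row by row, `det (N + t • E)` is a polynomial in `t` of degree at most
`rank E`: a term with more than `rank E` rows taken from `E` has linearly dependent rows.
By the Schur complement, `det (Aᵀ A + C) = det [[1, -A], [Aᵀ, C]]`, and replacing `A` by
`A + t • u gᵀ` perturbs this block matrix by a matrix of rank at most two, so the determinant
is quadratic in `t`. Since `Aᵀ A + C` is positive semidefinite, this quadratic is nonnegative
for every `t`, which forces its leading coefficient to be nonnegative; a convex quadratic
attains its maximum over `[-1, 1]` at an endpoint.
-/

open Matrix Polynomial Finset

namespace Matrix

variable {ι m n R K : Type*} [Fintype ι] [DecidableEq ι]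

def piecewiseRows (s : Finset ι) (E N : Matrix ι ι R) : Matrix ι ι R :=
  of fun i => if i ∈ s then E i else N i

theorem det_add_smul_eq_sum_det_piecewiseRows [CommRing R] (N E : Matrix ι ι R) (t : R) :
    (N + t • E).det = ∑ s : Finset ι, t ^ s.card * (piecewiseRows s E N).det := by
  have hsum : N + t • E = of ((fun i => t • E i) + fun i => N i) := by
    ext i j
    simp [add_comm]
  rw [hsum, det]
  refine (detRowAlternating.map_add_univ _ _).trans (sum_congr rfl fun s _ => ?_)
  have hrows : s.piecewise (fun i => t • E i) (fun i => N i) =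
      s.piecewise (fun i => t • piecewiseRows s E N i) (fun i => piecewiseRows s E N i) := by
    ext i j
    by_cases hi : i ∈ s <;> simp [piecewiseRows, hi]
  rw [hrows]
  exact (detRowAlternating.map_piecewise_smul (fun _ => t) _ s).trans (by simp [det])

theorem det_piecewiseRows_eq_zero_of_rank_lt [Field K] (N E : Matrix ι ι K) {s : Finset ι}
    (hs : E.rank < s.card) : (piecewiseRows s E N).det = 0 := by
  by_contra hdet
  have hrows : (fun i : s => E i) = piecewiseRows s E N ∘ (↑) := by
    ext i j
    show E i j = piecewiseRows s E N i j
    simp [piecewiseRows, i.2]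
  have hli : LinearIndependent K fun i : s => E i := by
    rw [hrows]
    exact (linearIndependent_rows_of_det_ne_zero hdet).comp _ Subtype.val_injective
  have hcard : s.card ≤ E.rank := by
    rw [← Fintype.card_coe, ← finrank_span_eq_card hli, rank_eq_finrank_span_row]
    exact Submodule.finrank_mono (Submodule.span_mono (Set.range_comp_subset_range _ _))
  omega

theorem exists_natDegree_le_rank_eval_eq_det_add_smul [Field K] (N E : Matrix ι ι K) :
    ∃ P : K[X], P.natDegree ≤ E.rank ∧ ∀ t, P.eval t = (N + t • E).det := by
  refine ⟨∑ s : Finset ι, C (piecewiseRows s E N).det * X ^ s.card,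
    natDegree_sum_le_of_forall_le _ _ fun s _ => ?_, fun t => ?_⟩
  · by_cases hs : s.card ≤ E.rank
    · exact (natDegree_C_mul_X_pow_le _ _).trans hs
    · simp [det_piecewiseRows_eq_zero_of_rank_lt N E (not_le.mp hs)]
  · simp only [det_add_smul_eq_sum_det_piecewiseRows, eval_finsetSum, eval_mul, eval_C, eval_pow,
      eval_X, mul_comm]

theorem rank_vecMulVec_add_vecMulVec_le [Fintype n] [Field K] (w w' : m → K) (v v' : n → K) :
    (vecMulVec w v + vecMulVec w' v').rank ≤ 2 := by
  rw [vecMulVec_eq Unit, vecMulVec_eq Unit, ← fromCols_mul_fromRows]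
  exact (rank_mul_le_left _ _).trans ((rank_le_card_width _).trans_eq (by simp))

theorem exists_quadratic_det_add_smul [Field K] (N E : Matrix ι ι K) (hE : E.rank ≤ 2) :
    ∃ a b c : K, ∀ t, (N + t • E).det = a * t ^ 2 + b * t + c := by
  obtain ⟨P, hP, hPt⟩ := exists_natDegree_le_rank_eval_eq_det_add_smul N E
  refine ⟨P.coeff 2, P.coeff 1, P.coeff 0, fun t => ?_⟩
  rw [← hPt, eval_eq_sum_range' (n := 3) (by omega)]
  simp only [sum_range_succ, sum_range_zero]
  ring

theorem det_transpose_mul_add_eq_det_fromBlocks [Fintype m] [DecidableEq m] [Fintype n]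
    [DecidableEq n] [CommRing R] (A : Matrix m n R) (C : Matrix n n R) :
    (Aᵀ * A + C).det = (fromBlocks 1 (-A) Aᵀ C).det := by
  rw [det_fromBlocks_one₁₁, Matrix.mul_neg, sub_neg_eq_add, add_comm]

theorem exists_quadratic_det_transpose_mul_add [Fintype m] [DecidableEq m] [Fintype n]
    [DecidableEq n] [Field K] (B : Matrix m n K) (u : m → K) (g : n → K) (C : Matrix n n K) :
    ∃ a b c : K, ∀ t : K,
      ((B + t • vecMulVec u g)ᵀ * (B + t • vecMulVec u g) + C).det = a * t ^ 2 + b * t + c := by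
  set E : Matrix (m ⊕ n) (m ⊕ n) K :=
    vecMulVec (Sum.elim 0 g) (Sum.elim u 0) + vecMulVec (Sum.elim (-u) 0) (Sum.elim 0 g)
  have hE : E = fromBlocks 0 (-vecMulVec u g) (vecMulVec u g)ᵀ 0 := by
    ext (i | i) (j | j) <;> simp [E, vecMulVec_apply, mul_comm]
  have hblocks : ∀ t : K, fromBlocks 1 (-(B + t • vecMulVec u g)) (B + t • vecMulVec u g)ᵀ C =
      fromBlocks 1 (-B) Bᵀ C + t • E := by
    intro t
    rw [hE, fromBlocks_smul, fromBlocks_add]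
    simp [transpose_add, add_comm]
  obtain ⟨a, b, c, habc⟩ :=
    exists_quadratic_det_add_smul (fromBlocks 1 (-B) Bᵀ C) E (rank_vecMulVec_add_vecMulVec_le ..)
  exact ⟨a, b, c, fun t => by rw [det_transpose_mul_add_eq_det_fromBlocks, hblocks, habc]⟩

end Matrix

theorem nonneg_of_forall_quadratic_nonneg {a b c : ℝ} (h : ∀ t, 0 ≤ a * t ^ 2 + b * t + c) :
    0 ≤ a := by
  by_contra! ha
  set x := (|c| + 1) / -a
  have hx : 0 ≤ x := div_nonneg (by positivity) (by linarith)
  have hax : a * x = -(|c| + 1) := by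
    simp only [x]
    field_simp [ha.ne]
  -- the odd term cancels between `t` and `-t`
  have hsum := add_nonneg (h √x) (h (-√x))
  rw [neg_sq, Real.sq_sqrt hx] at hsum
  linarith [le_abs_self c]

theorem exists_endpoint_forall_Icc_quadratic_le {a : ℝ} (ha : 0 ≤ a) (b c : ℝ) :
    ∃ s : ℝ, (s = -1 ∨ s = 1) ∧
      ∀ t ∈ Set.Icc (-1 : ℝ) 1, a * t ^ 2 + b * t + c ≤ a * s ^ 2 + b * s + c := by
  have hsq : ∀ t ∈ Set.Icc (-1 : ℝ) 1, a * t ^ 2 ≤ a := fun t ⟨h₁, h₂⟩ =>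
    mul_le_of_le_one_right ha (by nlinarith)
  rcases le_total 0 b with hb | hb
  · exact ⟨1, Or.inr rfl, fun t ht => by nlinarith [hsq t ht, ht.2]⟩
  · exact ⟨-1, Or.inl rfl, fun t ht => by nlinarith [hsq t ht, ht.1]⟩

/-- Core computation in the proof of Theorem 1: the determinant of
`(B + t·u gᵀ)ᵀ(B + t·u gᵀ) + C` is a convex quadratic polynomial in `t`, whose maximum
over `[-1, 1]` is attained at `t = -1` or `t = 1`. -/
theorem stmt5 (n p : ℕ) (B : Matrix (Fin n) (Fin p) ℝ) (u : Fin n → ℝ) (g : Fin p → ℝ)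
    (C : Matrix (Fin p) (Fin p) ℝ) (hC : C.PosSemidef) :
    ∃ α β γ : ℝ, 0 ≤ α ∧
      (∀ t : ℝ,
        ((B + t • Matrix.vecMulVec u g)ᵀ * (B + t • Matrix.vecMulVec u g) + C).det =
          α * t ^ 2 + β * t + γ) ∧
      ∃ s : ℝ, (s = -1 ∨ s = 1) ∧ ∀ t ∈ Set.Icc (-1 : ℝ) 1,
        ((B + t • Matrix.vecMulVec u g)ᵀ * (B + t • Matrix.vecMulVec u g) + C).det ≤
          ((B + s • Matrix.vecMulVec u g)ᵀ * (B + s • Matrix.vecMulVec u g) + C).det := by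
  obtain ⟨α, β, γ, hdet⟩ := exists_quadratic_det_transpose_mul_add B u g C
  have hpsd : ∀ A : Matrix (Fin n) (Fin p) ℝ, (Aᵀ * A + C).PosSemidef := fun A => by
    simpa [conjTranspose_eq_transpose_of_trivial] using
      (posSemidef_conjTranspose_mul_self A).add hC
  have hα : 0 ≤ α := nonneg_of_forall_quadratic_nonneg fun t => hdet t ▸ (hpsd _).det_nonneg
  obtain ⟨s, hs, hmax⟩ := exists_endpoint_forall_Icc_quadratic_le hα β γ
  exact ⟨α, β, γ, hα, hdet, s, hs, fun t ht => by simpa only [hdet] using hmax t ht⟩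
end

section
/- Let D be a symmetric positive definite p×p real matrix, let l ∈ ℝᵖ, set v = lᵀD l and V = (1 − v)·D + D l lᵀ D. Then V is symmetric; if v ≤ 1 then V is positive semidefinite; if v < 1 then V is positive definite; and if p ≥ 2 then V is positive definite if and only if v < 1. -/
/-!
With `c = 1 − v`, the quadratic form of `V = c • D + w wᵀ` (where `w = D l`) is
`x ↦ c · xᵀD x + (x ⬝ w)²`. For `c ≥ 0` (resp. `c > 0`) both terms are nonnegative (resp. the first
is positive for `x ≠ 0`). Conversely, in dimension at least two some nonzero `x` is orthogonal
to `w`, and positivity of the form at that `x` forces `c > 0`.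
-/

open Matrix

namespace Matrix

lemma isSymm_vecMulVec_self {n α : Type*} [CommMagma α] (w : n → α) : (vecMulVec w w).IsSymm :=
  IsSymm.ext fun i j => by simp only [vecMulVec_apply, mul_comm]

variable {n : Type*} [Fintype n]

lemma dotProduct_smul_add_vecMulVec_self_mulVec (A : Matrix n n ℝ) (c : ℝ) (w x : n → ℝ) :
    x ⬝ᵥ ((c • A + vecMulVec w w) *ᵥ x) = c * (x ⬝ᵥ (A *ᵥ x)) + (x ⬝ᵥ w) ^ 2 := by
  rw [add_mulVec, smul_mulVec, vecMulVec_mulVec, dotProduct_add, dotProduct_smul,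
    dotProduct_smul, dotProduct_comm w x, smul_eq_mul, op_smul_eq_mul, sq]

lemma PosSemidef.smul_add_vecMulVec_self {A : Matrix n n ℝ} (hA : A.PosSemidef) {c : ℝ}
    (hc : 0 ≤ c) (w : n → ℝ) : (c • A + vecMulVec w w).PosSemidef := by
  simpa using (hA.smul hc).add (posSemidef_vecMulVec_self_star w)

lemma PosDef.smul_add_vecMulVec_self {A : Matrix n n ℝ} (hA : A.PosDef) {c : ℝ}
    (hc : 0 < c) (w : n → ℝ) : (c • A + vecMulVec w w).PosDef := by
  simpa using (hA.smul hc).add_posSemidef (posSemidef_vecMulVec_self_star w)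

lemma PosDef.pos_of_posDef_smul_add_vecMulVec_self [Nontrivial n] {A : Matrix n n ℝ}
    (hA : A.PosDef) {c : ℝ} {w : n → ℝ} (hV : (c • A + vecMulVec w w).PosDef) : 0 < c := by
  obtain ⟨x, hx, hxw⟩ := exists_ne_zero_dotProduct_eq_zero w
  have hVx := hV.dotProduct_mulVec_pos hx
  have hAx := hA.dotProduct_mulVec_pos hx
  rw [star_trivial, dotProduct_smul_add_vecMulVec_self_mulVec, hxw] at hVx
  rw [star_trivial] at hAx
  exact pos_of_mul_pos_left (by simpa using hVx) hAx.le

end Matrix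

/-- Properties of the matrix `V = (1 − v)·D + D l lᵀ D` of the `D`-criterion
row-exchange formula, where `v = lᵀD l` is the leverage: `V` is symmetric; if `v ≤ 1`
it is positive semidefinite; if `v < 1` it is positive definite; and for `p ≥ 2` it is
positive definite if and only if `v < 1`. -/
theorem stmt7 (p : ℕ) (D : Matrix (Fin p) (Fin p) ℝ) (hD : D.PosDef) (l : Fin p → ℝ) :
    ((1 - l ⬝ᵥ (D *ᵥ l)) • D + Matrix.vecMulVec (D *ᵥ l) (D *ᵥ l)).IsSymm ∧
    (l ⬝ᵥ (D *ᵥ l) ≤ 1 →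
      ((1 - l ⬝ᵥ (D *ᵥ l)) • D + Matrix.vecMulVec (D *ᵥ l) (D *ᵥ l)).PosSemidef) ∧
    (l ⬝ᵥ (D *ᵥ l) < 1 →
      ((1 - l ⬝ᵥ (D *ᵥ l)) • D + Matrix.vecMulVec (D *ᵥ l) (D *ᵥ l)).PosDef) ∧
    (2 ≤ p →
      (((1 - l ⬝ᵥ (D *ᵥ l)) • D + Matrix.vecMulVec (D *ᵥ l) (D *ᵥ l)).PosDef ↔
        l ⬝ᵥ (D *ᵥ l) < 1)) := by
  have hpd : l ⬝ᵥ (D *ᵥ l) < 1 →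
      ((1 - l ⬝ᵥ (D *ᵥ l)) • D + vecMulVec (D *ᵥ l) (D *ᵥ l)).PosDef :=
    fun hv => hD.smul_add_vecMulVec_self (sub_pos.2 hv) _
  refine ⟨((isHermitian_iff_isSymm.1 hD.isHermitian).smul _).add (isSymm_vecMulVec_self _),
    fun hv => hD.posSemidef.smul_add_vecMulVec_self (sub_nonneg.2 hv) _, hpd,
    fun hp => ⟨fun hV => ?_, hpd⟩⟩
  have : Nontrivial (Fin p) := Fin.nontrivial_iff_two_le.2 hp
  exact sub_pos.1 (hD.pos_of_posDef_smul_add_vecMulVec_self hV)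
end

section
/- Let A be a symmetric positive definite p×p real matrix with D = A⁻¹, let W be a symmetric p×p real matrix, let u, t ∈ ℝᵖ, and suppose à = A + t tᵀ − u uᵀ is invertible. Set v = uᵀD u, Δ = (1 + tᵀD t)(1 − v) + (uᵀD t)², φ = uᵀD W D u, and U = (1 − v)·D W D + D u uᵀ D W D + D W D u uᵀ D − φ·D. Then Δ ≠ 0 and tr(W D) − tr(W Ã⁻¹) = (tᵀU t − φ)/Δ. -/
/-!
Write `Ã = A + t tᵀ - u uᵀ = A + U V` with `U = [t u]` (columns) and `V = [t; -u]` (rows), and let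
`D = A⁻¹`. The matrix determinant lemma gives `det Ã = det A · det S` for the `2 × 2` capacitance
matrix `S = 1 + V D U = [[1 + tᵀDt, tᵀDu], [-uᵀDt, 1 - uᵀDu]]`, whose determinant is `Δ` once `D` is
symmetric; in particular `Δ ≠ 0`. The Woodbury identity `Ã⁻¹ = D - D U S⁻¹ V D` and cyclicity of the
trace turn `tr(W D) - tr(W Ã⁻¹)` into `tr(S⁻¹ · V (D W D) U)`, and expanding `S⁻¹ = adj S / det S`
gives exactly `(tᵀUt - φ) / Δ`.
-/

open Matrix

variable {n R K : Type*} [Fintype n] [DecidableEq n] [CommRing R] [Field K]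

omit [Fintype n] [DecidableEq n] in
theorem transpose_of_mul_of_fin_two (a b c d : n → R) :
    (of ![a, b])ᵀ * of ![c, d] = vecMulVec a c + vecMulVec b d := by
  ext i j
  simp [mul_apply, Fin.sum_univ_two, vecMulVec_apply]

omit [DecidableEq n] in
theorem of_mul_mul_transpose_of_fin_two (a b c d : n → R) (M : Matrix n n R) :
    of ![a, b] * M * (of ![c, d])ᵀ =
      !![a ⬝ᵥ M *ᵥ c, a ⬝ᵥ M *ᵥ d; b ⬝ᵥ M *ᵥ c, b ⬝ᵥ M *ᵥ d] := by
  simp only [dotProduct_mulVec]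
  ext i j
  fin_cases i <;> fin_cases j <;> simp [mul_apply, vecMul, dotProduct]

theorem trace_mul_inv_sub_trace_mul_inv_add_mul {m : Type*} [Fintype m] [DecidableEq m]
    (W A : Matrix n n R) (U : Matrix n m R) (V : Matrix m n R) (hA : IsUnit A.det)
    (hAUV : IsUnit (A + U * V).det) :
    (W * A⁻¹).trace - (W * (A + U * V)⁻¹).trace =
      ((1 + V * A⁻¹ * U)⁻¹ * (V * (A⁻¹ * W * A⁻¹) * U)).trace := by
  have hS : IsUnit ((1 : Matrix m m R)⁻¹ + V * A⁻¹ * U) := by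
    rw [det_add_mul _ _ hA] at hAUV
    rw [inv_one, isUnit_iff_isUnit_det]
    exact isUnit_of_mul_isUnit_right hAUV
  have hwoodbury := add_mul_mul_inv_eq_sub A U 1 V ((isUnit_iff_isUnit_det A).2 hA) isUnit_one hS
  rw [Matrix.mul_one, inv_one] at hwoodbury
  rw [hwoodbury, Matrix.mul_sub, trace_sub, sub_sub_cancel,
    show W * (A⁻¹ * U * (1 + V * A⁻¹ * U)⁻¹ * V * A⁻¹) =
      W * A⁻¹ * U * ((1 + V * A⁻¹ * U)⁻¹ * (V * A⁻¹)) by simp only [Matrix.mul_assoc],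
    trace_mul_comm]
  simp only [Matrix.mul_assoc]

theorem trace_inv_mul_fin_two (S M : Matrix (Fin 2) (Fin 2) K) :
    (S⁻¹ * M).trace =
      (S 1 1 * M 0 0 - S 0 1 * M 1 0 - S 1 0 * M 0 1 + S 0 0 * M 1 1) / S.det := by
  rw [inv_def, Ring.inverse_eq_inv', adjugate_fin_two, smul_mul, trace_smul, trace_fin_two]
  simp only [mul_apply, Fin.sum_univ_two, of_apply, cons_val', cons_val_fin_one, cons_val_zero,
    cons_val_one, smul_eq_mul]
  ring

omit [DecidableEq n] in
theorem dotProduct_mul_vecMulVec_mul_mulVec (P Q : Matrix n n R) (a b x y : n → R) :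
    x ⬝ᵥ (P * vecMulVec a b * Q) *ᵥ y = (x ⬝ᵥ P *ᵥ a) * (b ⬝ᵥ Q *ᵥ y) := by
  rw [← mulVec_mulVec, ← mulVec_mulVec, vecMulVec_mulVec, op_smul_eq_smul, mulVec_smul,
    dotProduct_smul, smul_eq_mul, mul_comm]

section RankTwo

variable (A : Matrix n n R) (t u : n → R)

omit [Fintype n] [DecidableEq n] in
theorem add_vecMulVec_sub_vecMulVec_eq_add_mul :
    A + vecMulVec t t - vecMulVec u u = A + (of ![t, u])ᵀ * of ![t, -u] := by
  rw [transpose_of_mul_of_fin_two, vecMulVec_neg, ← add_assoc, sub_eq_add_neg]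

omit [DecidableEq n] in
theorem one_add_of_neg_mul_mul_transpose_of :
    1 + of ![t, -u] * A * (of ![t, u])ᵀ =
      !![1 + t ⬝ᵥ A *ᵥ t, t ⬝ᵥ A *ᵥ u; -(u ⬝ᵥ A *ᵥ t), 1 - u ⬝ᵥ A *ᵥ u] := by
  rw [of_mul_mul_transpose_of_fin_two]
  ext i j
  fin_cases i <;> fin_cases j <;> simp [sub_eq_add_neg]

theorem det_add_vecMulVec_sub_vecMulVec (hA : IsUnit A.det) :
    (A + vecMulVec t t - vecMulVec u u).det =
      A.det * ((1 + t ⬝ᵥ A⁻¹ *ᵥ t) * (1 - u ⬝ᵥ A⁻¹ *ᵥ u) + (t ⬝ᵥ A⁻¹ *ᵥ u) * (u ⬝ᵥ A⁻¹ *ᵥ t)) := by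
  rw [add_vecMulVec_sub_vecMulVec_eq_add_mul, det_add_mul _ _ hA,
    one_add_of_neg_mul_mul_transpose_of, det_fin_two_of]
  ring

end RankTwo

theorem trace_mul_inv_sub_trace_mul_inv_add_vecMulVec_sub_vecMulVec (A W : Matrix n n K)
    (t u : n → K) (hA : IsUnit A.det) (hA' : IsUnit (A + vecMulVec t t - vecMulVec u u).det) :
    (W * A⁻¹).trace - (W * (A + vecMulVec t t - vecMulVec u u)⁻¹).trace =
      (t ⬝ᵥ ((1 - u ⬝ᵥ A⁻¹ *ᵥ u) • (A⁻¹ * W * A⁻¹) + A⁻¹ * vecMulVec u u * (A⁻¹ * W * A⁻¹) +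
          (A⁻¹ * W * A⁻¹) * vecMulVec u u * A⁻¹ - (u ⬝ᵥ (A⁻¹ * W * A⁻¹) *ᵥ u) • A⁻¹) *ᵥ t -
        u ⬝ᵥ (A⁻¹ * W * A⁻¹) *ᵥ u) /
      ((1 + t ⬝ᵥ A⁻¹ *ᵥ t) * (1 - u ⬝ᵥ A⁻¹ *ᵥ u) + (t ⬝ᵥ A⁻¹ *ᵥ u) * (u ⬝ᵥ A⁻¹ *ᵥ t)) := by
  rw [add_vecMulVec_sub_vecMulVec_eq_add_mul] at hA' ⊢
  rw [trace_mul_inv_sub_trace_mul_inv_add_mul _ _ _ _ hA hA', trace_inv_mul_fin_two,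
    one_add_of_neg_mul_mul_transpose_of, of_mul_mul_transpose_of_fin_two, det_fin_two_of]
  simp only [sub_mulVec, add_mulVec, smul_mulVec, dotProduct_sub, dotProduct_add, dotProduct_smul,
    smul_eq_mul, dotProduct_mul_vecMulVec_mul_mulVec, neg_dotProduct, of_apply, cons_val',
    cons_val_zero, cons_val_one, cons_val_fin_one]
  ring


theorem stmt9_general (p : ℕ) (A : Matrix (Fin p) (Fin p) ℝ) (hA : A.PosDef)
    (D : Matrix (Fin p) (Fin p) ℝ) (hD : D = A⁻¹)
    (W : Matrix (Fin p) (Fin p) ℝ)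
    (u t : Fin p → ℝ)
    (Atil : Matrix (Fin p) (Fin p) ℝ)
    (hAtil : Atil = A + Matrix.vecMulVec t t - Matrix.vecMulVec u u)
    (hAtilInv : IsUnit Atil.det)
    (v Δ φ : ℝ)
    (hv : v = u ⬝ᵥ (D *ᵥ u))
    (hΔ : Δ = (1 + t ⬝ᵥ (D *ᵥ t)) * (1 - v) + (u ⬝ᵥ (D *ᵥ t)) ^ 2)
    (hφ : φ = u ⬝ᵥ ((D * W * D) *ᵥ u))
    (U : Matrix (Fin p) (Fin p) ℝ)
    (hU : U = (1 - v) • (D * W * D) + D * Matrix.vecMulVec u u * (D * W * D) +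
      (D * W * D) * Matrix.vecMulVec u u * D - φ • D) :
    Δ ≠ 0 ∧ (W * D).trace - (W * Atil⁻¹).trace = (t ⬝ᵥ (U *ᵥ t) - φ) / Δ := by
  subst hD hAtil hv hΔ hφ hU
  have hAdet : IsUnit A.det := hA.det_pos.ne'.isUnit
  have hsymm : t ⬝ᵥ A⁻¹ *ᵥ u = u ⬝ᵥ A⁻¹ *ᵥ t := by
    nth_rewrite 1 [← (isHermitian_iff_isSymm.1 hA.isHermitian).inv.eq]
    exact dotProduct_transpose_mulVec _ _ _
  rw [trace_mul_inv_sub_trace_mul_inv_add_vecMulVec_sub_vecMulVec _ _ _ _ hAdet hAtilInv, hsymm,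
    ← sq]
  refine ⟨?_, rfl⟩
  rw [det_add_vecMulVec_sub_vecMulVec _ _ _ hAdet, hsymm, ← sq] at hAtilInv
  exact right_ne_zero_of_mul hAtilInv.ne_zero

/-- The weighted `A`-criterion row-exchange formula (Equation 6 of the paper and its
weighted generalization): exchanging row `u` of the model matrix for a new row `t`
changes `tr(W(LᵀL)⁻¹)` by exactly `(tᵀUt − φ)/Δ`. -/
theorem stmt9 (p : ℕ) (A : Matrix (Fin p) (Fin p) ℝ) (hA : A.PosDef)
    (D : Matrix (Fin p) (Fin p) ℝ) (hD : D = A⁻¹)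
    (W : Matrix (Fin p) (Fin p) ℝ) (hW : W.IsSymm)
    (u t : Fin p → ℝ)
    (Atil : Matrix (Fin p) (Fin p) ℝ)
    (hAtil : Atil = A + Matrix.vecMulVec t t - Matrix.vecMulVec u u)
    (hAtilInv : IsUnit Atil.det)
    (v Δ φ : ℝ)
    (hv : v = u ⬝ᵥ (D *ᵥ u))
    (hΔ : Δ = (1 + t ⬝ᵥ (D *ᵥ t)) * (1 - v) + (u ⬝ᵥ (D *ᵥ t)) ^ 2)
    (hφ : φ = u ⬝ᵥ ((D * W * D) *ᵥ u))
    (U : Matrix (Fin p) (Fin p) ℝ)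
    (hU : U = (1 - v) • (D * W * D) + D * Matrix.vecMulVec u u * (D * W * D) +
      (D * W * D) * Matrix.vecMulVec u u * D - φ • D) :
    Δ ≠ 0 ∧ (W * D).trace - (W * Atil⁻¹).trace = (t ⬝ᵥ (U *ᵥ t) - φ) / Δ :=
  stmt9_general p A hA D hD W u t Atil hAtil hAtilInv v Δ φ hv hΔ hφ U hU
end

section
/- Let F be an n×p real matrix and Z an n×b real matrix, let L = [F | Z], and assume LᵀL is invertible; let P_Z = Z(ZᵀZ)⁻¹Zᵀ. For w > 0 let W_w be the (p+b)×(p+b) diagonal matrix whose first p diagonal entries equal 1 and whose last b diagonal entries equal w. Then tr(W_w (LᵀL)⁻¹) tends to tr((Fᵀ(I − P_Z)F)⁻¹) as w tends to 0 from the right. -/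
/-!
By the Schur-complement formula the upper-left `p × p` block of `(LᵀL)⁻¹` is
`(FᵀF - FᵀZ(ZᵀZ)⁻¹ZᵀF)⁻¹ = (Fᵀ(I - P_Z)F)⁻¹`, so `tr(W_w (LᵀL)⁻¹)` is an affine function of `w`
whose value at `0` is the limit. The Schur complement is available because `ZᵀZ` is a principal
block of the positive definite Gram matrix `LᵀL`, hence invertible.
-/

open Matrix

namespace Matrix

variable {m n R : Type*} [Fintype m] [Fintype n]

theorem trace_fromBlocks [AddCommMonoid R] (A : Matrix m m R) (B : Matrix m n R)
    (C : Matrix n m R) (D : Matrix n n R) :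
    (fromBlocks A B C D).trace = A.trace + D.trace := by
  simp [trace, Fintype.sum_sum_type]

theorem trace_fromBlocks_one_smul_one_mul [DecidableEq m] [DecidableEq n] [Semiring R]
    (w : R) (M : Matrix (m ⊕ n) (m ⊕ n) R) :
    (fromBlocks 1 0 0 (w • 1) * M).trace = M.toBlocks₁₁.trace + w * M.toBlocks₂₂.trace := by
  conv_lhs => rw [← fromBlocks_toBlocks M]
  simp [fromBlocks_multiply, trace_fromBlocks]

theorem toBlocks₁₁_inv_fromBlocks [DecidableEq m] [DecidableEq n] [CommRing R]
    {A : Matrix m m R} {B : Matrix m n R} {C : Matrix n m R} {D : Matrix n n R}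
    (h : IsUnit (fromBlocks A B C D)) (hD : IsUnit D) :
    (fromBlocks A B C D)⁻¹.toBlocks₁₁ = (A - B * D⁻¹ * C)⁻¹ := by
  let := h.invertible
  let := hD.invertible
  let := invertibleOfFromBlocks₂₂Invertible A B C D
  simp only [← invOf_eq_nonsing_inv, invOf_fromBlocks₂₂_eq, toBlocks_fromBlocks₁₁]

open scoped ComplexOrder in
theorem isUnit_conjTranspose_mul_self_of_isUnit_fromCols {𝕜 k : Type*} [RCLike 𝕜] [Fintype k]
    [DecidableEq m] [DecidableEq n] {F : Matrix k m 𝕜} {Z : Matrix k n 𝕜}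
    (h : IsUnit ((fromCols F Z)ᴴ * fromCols F Z)) : IsUnit (Zᴴ * Z) := by
  have hpd := (posSemidef_conjTranspose_mul_self _).posDef_iff_isUnit.mpr h
  convert (hpd.submatrix Sum.inr_injective).isUnit using 1
  rw [conjTranspose_fromCols_eq_fromRows_conjTranspose, fromRows_mul_fromCols]
  rfl

end Matrix

/-- The weighted `A`-criterion `tr(W_w (LᵀL)⁻¹)` tends to the `A_s`-criterion
`tr((Fᵀ(I − P_Z)F)⁻¹)` as the nuisance weight `w` tends to `0⁺`. -/
theorem stmt12 (n p b : ℕ) (F : Matrix (Fin n) (Fin p) ℝ) (Z : Matrix (Fin n) (Fin b) ℝ)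
    (hL : IsUnit ((Matrix.fromCols F Z)ᵀ * Matrix.fromCols F Z).det) :
    Filter.Tendsto
      (fun w : ℝ =>
        (Matrix.fromBlocks (1 : Matrix (Fin p) (Fin p) ℝ) 0 0
            (w • (1 : Matrix (Fin b) (Fin b) ℝ)) *
          ((Matrix.fromCols F Z)ᵀ * Matrix.fromCols F Z)⁻¹).trace)
      (nhdsWithin 0 (Set.Ioi 0))
      (nhds ((Fᵀ * (1 - Z * (Zᵀ * Z)⁻¹ * Zᵀ) * F)⁻¹).trace) := by
  set L := fromCols F Z
  have hgram : Lᵀ * L = fromBlocks (Fᵀ * F) (Fᵀ * Z) (Zᵀ * F) (Zᵀ * Z) := by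
    rw [transpose_fromCols, fromRows_mul_fromCols]
  have hLL : IsUnit (Lᵀ * L) := (isUnit_iff_isUnit_det _).2 hL
  have hZZ : IsUnit (Zᵀ * Z) := by
    simpa using isUnit_conjTranspose_mul_self_of_isUnit_fromCols (F := F) (Z := Z)
      (by rwa [conjTranspose_eq_transpose_of_trivial])
  have hschur : (Lᵀ * L)⁻¹.toBlocks₁₁ = (Fᵀ * (1 - Z * (Zᵀ * Z)⁻¹ * Zᵀ) * F)⁻¹ := by
    rw [hgram, toBlocks₁₁_inv_fromBlocks (hgram ▸ hLL) hZZ]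
    simp only [Matrix.mul_sub, Matrix.sub_mul, Matrix.mul_one, Matrix.mul_assoc]
  simp_rw [trace_fromBlocks_one_smul_one_mul, hschur]
  refine tendsto_nhdsWithin_of_tendsto_nhds ?_
  simpa using ((Filter.tendsto_id (x := nhds (0 : ℝ))).mul_const _).const_add _
end
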